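/- Let X be a compact Hausdorff space with base point x0, let A be a unital C*-algebra and let m ≥ 1. If m ≥ gsr(𝕋A), where 𝕋A = C(𝕋, A), then the forgetful map F : [X, Lg_m(A)]_* → [X, Lg_m(A)], from based homotopy classes (base point e_m = (0,…,0,1) ∈ Lg_m(A)) to free homotopy classes, is injective. -/

import Mathlib

open scoped unitInterval

noncomputable section

/-- The set of left unimodular vectors in `A^m`. -/
def Lg (m : ℕ) (A : Type*) [Ring A] : Set (Fin m → A) :=
  {v | ∃ w : Fin m → A, ∑ i, w i * v i = 1}

/-- `GL_m(A)` acts transitively on `Lg_m(A)`. -/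
def GLtrans (m : ℕ) (A : Type*) [Ring A] : Prop :=
  ∀ v ∈ Lg m A, ∀ w ∈ Lg m A,
    ∃ M : Matrix (Fin m) (Fin m) A, IsUnit M ∧ M.mulVec v = w

/-- The general stable rank: the least `n ≥ 1` such that `GL_m(A)` acts transitively on
`Lg_m(A)` for all `m ≥ n` (and `∞` if no such `n` exists). -/
def gsr (A : Type*) [Ring A] : ℕ∞ :=
  sInf {N : ℕ∞ | ∃ n : ℕ, N = n ∧ 1 ≤ n ∧ ∀ m : ℕ, n ≤ m → GLtrans m A}

/-- The connected stable rank: the least `n ≥ 1` such that `Lg_m(A)` is connected for all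
`m ≥ n` (and `∞` if no such `n` exists). -/
def csr (A : Type*) [Ring A] [TopologicalSpace A] : ℕ∞ :=
  sInf {N : ℕ∞ | ∃ n : ℕ, N = n ∧ 1 ≤ n ∧ ∀ m : ℕ, n ≤ m → IsConnected (Lg m A)}

/-- The base point `e_m = (0, …, 0, 1)` of `Lg_m(A)`. -/
def eVec (m : ℕ) (A : Type*) [Ring A] : Fin m → A :=
  fun i => if (i : ℕ) = m - 1 then 1 else 0


section AuxCStar
variable {A : Type*} [CStarAlgebra A]

lemma pair_ineq [PartialOrder A] [StarOrderedRing A] (a b : A) :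
    star a * b + star b * a ≤ star a * a + star b * b := by
  have h0 : 0 ≤ star (a - b) * (a - b) := star_mul_self_nonneg _
  have heq : star (a - b) * (a - b)
      = (star a * a + star b * b) - (star a * b + star b * a) := by
    rw [star_sub]; noncomm_ring
  rw [heq, sub_nonneg] at h0
  exact h0


lemma sum_star_mul_self_isUnit {m : ℕ} {v : Fin m → A}
    (hv : v ∈ Lg m A) : IsUnit (∑ i, star (v i) * v i) := by
  by_cases hA : Subsingleton A
  · exact isUnit_of_subsingleton _
  have : Nontrivial A := not_subsingleton_iff_nontrivial.mp hA
  letI := CStarAlgebra.spectralOrder A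
  haveI := CStarAlgebra.spectralOrderedRing A
  obtain ⟨w, hw⟩ := hv
  rcases Nat.eq_zero_or_pos m with hm | hm
  · exfalso
    subst hm
    simp only [Finset.univ_eq_empty, Finset.sum_empty] at hw
    exact zero_ne_one hw
  set x : Fin m → A := fun i => w i * v i with hx
  set Q : A := ∑ i, star (x i) * x i with hQ
  set a : A := ∑ i, star (v i) * v i with ha
  -- step 1 : (1 : A) ≤ m • Q + m • Q
  have hS : (1 : A) = ∑ i, ∑ j, star (x i) * x j := by
    calc (1 : A) = star (∑ i, x i) * (∑ j, x j) := by rw [hw]; simp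
    _ = ∑ i, ∑ j, star (x i) * x j := by
        rw [star_sum, Finset.sum_mul_sum]
  have hDD : (1 : A) + 1 ≤ m • Q + m • Q := by
    have h2 : (1 : A) + 1 = ∑ i, ∑ j, (star (x i) * x j + star (x j) * x i) := by
      nth_rewrite 2 [hS]
      rw [Finset.sum_comm (f := fun i j => star (x i) * x j)]
      nth_rewrite 1 [hS]
      rw [← Finset.sum_add_distrib]
      congr 1; ext i
      rw [← Finset.sum_add_distrib]
    have h3 : ∑ i : Fin m, ∑ j : Fin m, (star (x i) * x j + star (x j) * x i)
        ≤ ∑ i : Fin m, ∑ j : Fin m, (star (x i) * x i + star (x j) * x j) := by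
      refine Finset.sum_le_sum fun i _ => Finset.sum_le_sum fun j _ => pair_ineq _ _
    have h4 : ∑ i : Fin m, ∑ j : Fin m, (star (x i) * x i + star (x j) * x j)
        = m • Q + m • Q := by
      simp only [Finset.sum_add_distrib, Finset.sum_const, Finset.card_univ,
        Fintype.card_fin, ← Finset.smul_sum, ← hQ]
    rw [h2]
    calc _ ≤ _ := h3
    _ = _ := h4
  have h01 : (0:A) ≤ 1 := by simpa using star_mul_self_nonneg (1:A)
  have h1 : (1 : A) ≤ m • Q + m • Q := le_trans (le_add_of_nonneg_left h01) hDD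
  -- step 2 : Q ≤ C • a
  set C : ℝ := 1 + ∑ i, ‖star (w i) * w i‖ with hC
  have hC1 : (1:ℝ) ≤ C := le_add_of_nonneg_right (Finset.sum_nonneg fun _ _ => norm_nonneg _)
  have hsm : ∀ r s : ℝ, r ≤ s → (r • 1 : A) ≤ s • 1 := by
    intro r s h
    rw [← sub_nonneg, ← sub_smul]
    obtain ⟨t, ht⟩ : ∃ t : ℝ, t * t = s - r :=
      ⟨Real.sqrt (s - r), Real.mul_self_sqrt (sub_nonneg.mpr h)⟩
    calc (0:A) ≤ star ((t:ℝ) • (1:A)) * ((t:ℝ) • (1:A)) := star_mul_self_nonneg _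
      _ = (s - r) • 1 := by
          rw [star_smul, star_one, star_trivial, smul_mul_smul_comm, one_mul, ht]
  have hQa : Q ≤ C • a := by
    have hterm : ∀ i : Fin m, star (x i) * x i ≤ C • (star (v i) * v i) := by
      intro i
      have e1 : star (x i) * x i = star (v i) * (star (w i) * w i) * v i := by
        show star (w i * v i) * (w i * v i) = _
        rw [star_mul]; noncomm_ring
      have e2 : star (w i) * w i ≤ ‖star (w i) * w i‖ • (1:A) := by
        simpa [Algebra.algebraMap_eq_smul_one] using
          IsSelfAdjoint.le_algebraMap_norm_self (IsSelfAdjoint.star_mul_self (w i))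
      have e3 : (‖star (w i) * w i‖ : ℝ) • (1:A) ≤ C • 1 := by
        refine hsm _ _ ?_
        have hle := Finset.single_le_sum
          (fun (j : Fin m) _ => norm_nonneg (star (w j) * w j)) (Finset.mem_univ i)
        rw [hC]; linarith
      have e4 := star_left_conjugate_le_conjugate (e2.trans e3) (v i)
      calc star (x i) * x i = star (v i) * (star (w i) * w i) * v i := e1
        _ ≤ star (v i) * (C • (1:A)) * v i := e4
        _ = C • (star (v i) * v i) := by
            rw [mul_smul_comm, mul_one, smul_mul_assoc]
    calc Q ≤ ∑ i, C • (star (v i) * v i) := Finset.sum_le_sum fun i _ => hterm i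
      _ = C • a := by rw [← Finset.smul_sum]
  -- step 3 : combine
  set c : ℝ := (m : ℝ) * C + (m : ℝ) * C with hc
  have hcpos : 0 < c := by
    have : (0:ℝ) < (m:ℝ) * C :=
      mul_pos (by exact_mod_cast hm) (lt_of_lt_of_le one_pos hC1)
    rw [hc]; linarith
  have h1c : (1 : A) ≤ c • a := by
    have := nsmul_le_nsmul_right hQa m
    have hconv : m • (C • a) = ((m : ℝ) * C) • a := by
      rw [← Nat.cast_smul_eq_nsmul ℝ m (C • a), smul_smul]
    calc (1:A) ≤ m • Q + m • Q := h1
      _ ≤ m • (C • a) + m • (C • a) := add_le_add this this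
      _ = c • a := by rw [hconv, hc, add_smul]
  have hca : IsUnit (c • a) := CStarAlgebra.isUnit_of_le 1 h1c (isUnit_one.isStrictlyPositive h01)
  have hfin : a = (c⁻¹ • (1:A)) * (c • a) := by
    rw [smul_mul_assoc, one_mul, smul_smul, inv_mul_cancel₀ hcpos.ne', one_smul]
  rw [hfin]
  refine IsUnit.mul ?_ hca
  have : IsUnit (c⁻¹ : ℝ) := isUnit_iff_ne_zero.mpr (inv_ne_zero hcpos.ne')
  simpa [Algebra.algebraMap_eq_smul_one] using ((algebraMap ℝ A).isUnit_map this)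


end AuxCStar

lemma Lg.mulVec_mem {R : Type*} [Ring R] {m : ℕ} {M : Matrix (Fin m) (Fin m) R}
    (hM : IsUnit M) {v : Fin m → R} (hv : v ∈ Lg m R) : M.mulVec v ∈ Lg m R := by
  obtain ⟨w, hw⟩ := hv
  refine ⟨Matrix.vecMul w hM.unit⁻¹.val, ?_⟩
  have key : ∀ u z : Fin m → R, ∑ i, u i * z i = dotProduct u z := fun _ _ => rfl
  rw [key, Matrix.dotProduct_mulVec]
  rw [Matrix.vecMul_vecMul, hM.val_inv_mul, Matrix.vecMul_one, ← key, hw]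


lemma eVec_mem_Lg {R : Type*} [Ring R] {m : ℕ} (hm : 1 ≤ m) : eVec m R ∈ Lg m R := by
  refine ⟨eVec m R, ?_⟩
  have hlt : m - 1 < m := Nat.sub_lt hm one_pos
  have : ∀ i : Fin m, eVec m R i * eVec m R i = if i = (⟨m - 1, hlt⟩ : Fin m) then 1 else 0 := by
    intro i
    simp only [eVec, Fin.ext_iff]
    split_ifs <;> simp
  simp only [this, Finset.sum_ite_eq', Finset.mem_univ, if_pos]

/-- gsr extraction -/
lemma GLtrans_of_gsr_le {A : Type*} [Ring A] {m : ℕ} (h : gsr A ≤ (m : ℕ∞)) :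
    GLtrans m A := by
  set S : Set ℕ∞ := {N : ℕ∞ | ∃ n : ℕ, N = n ∧ 1 ≤ n ∧ ∀ k : ℕ, n ≤ k → GLtrans k A} with hS
  have hne : S.Nonempty := by
    by_contra hc
    rw [Set.not_nonempty_iff_eq_empty] at hc
    rw [gsr, ← hS, hc, sInf_empty] at h
    exact (ENat.coe_ne_top m) (top_le_iff.mp h)
  have hmem : sInf S ∈ S := csInf_mem hne
  obtain ⟨n, hn, -, hall⟩ := hmem
  refine hall m ?_
  have : (n : ℕ∞) ≤ (m : ℕ∞) := by rw [← hn]; exact le_trans (le_refl _) h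
  exact_mod_cast this


/-- **Theorem.** If `m ≥ gsr(𝕋A)`, where `𝕋A = C(𝕋, A)`, then the forgetful map
`F : [X, Lg_m(A)]_* → [X, Lg_m(A)]` is injective: two maps based at `e_m` that are freely
homotopic are homotopic through based maps. -/
theorem forgetful_map_injective {X : Type*} [TopologicalSpace X] [CompactSpace X]
    [T2Space X] (x0 : X) {A : Type*} [CStarAlgebra A] (m : ℕ) (hm : 1 ≤ m)
    (hgsr : gsr (ContinuousMap Circle A) ≤ (m : ℕ)) :
    ∀ f g : ContinuousMap X ↥(Lg m A),
      (f x0 : Fin m → A) = eVec m A → (g x0 : Fin m → A) = eVec m A →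
      f.Homotopic g → f.HomotopicRel g {x0} := by
  intro f g hf0 hg0 hfg
  obtain ⟨H⟩ := hfg
  haveI : Fact ((0:ℝ) < 1) := ⟨one_pos⟩
  -- the track of the homotopy at the base point
  set γ : I → (Fin m → A) := fun t => ((H (t, x0) : Fin m → A)) with hγ
  have hγmem : ∀ t : I, γ t ∈ Lg m A := fun t => (H (t, x0)).2
  have hγcont : Continuous γ :=
    continuous_subtype_val.comp (H.continuous.comp (continuous_id.prodMk continuous_const))
  have hγ0 : γ 0 = eVec m A := by
    show ((H (0, x0) : Fin m → A)) = _
    rw [H.apply_zero]; exact hf0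
  have hγ1 : γ 1 = eVec m A := by
    show ((H (1, x0) : Fin m → A)) = _
    rw [H.apply_one]; exact hg0
  -- transplant γ to the circle
  set F : ℝ → (Fin m → A) := fun t => γ (Set.projIcc 0 1 zero_le_one t) with hF
  have hFcont : Continuous F := hγcont.comp continuous_projIcc
  have hF0 : F 0 = eVec m A := by
    rw [hF]; simp only [Set.projIcc_left]; exact hγ0
  have hF1 : F 1 = eVec m A := by
    rw [hF]; simp only [Set.projIcc_right]; exact hγ1
  have hFt : ∀ t : I, F (t : ℝ) = γ t := by
    intro t
    exact congrArg γ (Set.projIcc_val zero_le_one t)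
  set φ : AddCircle (1:ℝ) → (Fin m → A) := AddCircle.liftIco 1 0 F with hφ
  have hφcont : Continuous φ :=
    AddCircle.liftIco_zero_continuous (by rw [hF0, hF1]) hFcont.continuousOn
  have hφt : ∀ t : ℝ, t ∈ Set.Ico (0:ℝ) 1 → φ ↑t = F t := fun t ht =>
    AddCircle.liftIco_zero_coe_apply ht
  set hom : AddCircle (1:ℝ) ≃ₜ Circle := AddCircle.homeomorphCircle one_ne_zero with hhom
  set c : I → Circle := fun t => hom ((t : ℝ) : AddCircle (1:ℝ)) with hc
  have hccont : Continuous c :=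
    hom.continuous.comp ((AddCircle.continuous_mk' (1:ℝ)).comp continuous_subtype_val)
  -- the vector over C(Circle, A)
  set vTA : Fin m → C(Circle, A) :=
    fun j => ⟨fun z => φ (hom.symm z) j,
      (continuous_apply j).comp (hφcont.comp hom.symm.continuous)⟩ with hvTA
  have hvc : ∀ (t : I) (j : Fin m), vTA j (c t) = γ t j := by
    intro t j
    have hsymm : hom.symm (c t) = ((t : ℝ) : AddCircle (1:ℝ)) := hom.symm_apply_apply _
    show φ (hom.symm (c t)) j = γ t j
    rw [hsymm]
    rcases lt_or_eq_of_le t.2.2 with h1 | h1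
    · rw [hφt (t : ℝ) ⟨t.2.1, h1⟩, hFt]
    · have : ((t:ℝ) : AddCircle (1:ℝ)) = ((0:ℝ) : AddCircle (1:ℝ)) := by
        rw [h1]
        exact_mod_cast AddCircle.coe_period (p := (1:ℝ))
      rw [this, hφt 0 (by constructor <;> norm_num), hF0]
      have ht1 : t = 1 := Subtype.ext h1
      rw [ht1, hγ1]
  have hsurj : ∀ z : Circle, ∃ t : I, c t = z := by
    intro z
    obtain ⟨b, hb, hbz⟩ := AddCircle.eq_coe_Ico (hom.symm z)
    refine ⟨⟨b, hb.1, le_of_lt hb.2⟩, ?_⟩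
    show hom ((b : ℝ) : AddCircle (1:ℝ)) = z
    rw [hbz]
    exact hom.apply_symm_apply z
  -- vTA is unimodular over C(Circle, A)
  have hvTAmem : vTA ∈ Lg m C(Circle, A) := by
    set aC : C(Circle, A) := ∑ j, star (vTA j) * vTA j with haC
    have haCz : ∀ z : Circle, aC z = ∑ j, star (vTA j z) * vTA j z := by
      intro z
      rw [haC]
      simp [ContinuousMap.sum_apply]
    have haCunit : IsUnit aC := by
      rw [ContinuousMap.isUnit_iff_forall_isUnit]
      intro z
      obtain ⟨t, rfl⟩ := hsurj z
      rw [haCz]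
      simp only [hvc]
      exact sum_star_mul_self_isUnit (hγmem t)
    obtain ⟨u, hu⟩ := haCunit
    refine ⟨fun j => u⁻¹.val * star (vTA j), ?_⟩
    have hsum : ∑ j, u⁻¹.val * star (vTA j) * vTA j
        = u⁻¹.val * ∑ j, star (vTA j) * vTA j := by
      rw [Finset.mul_sum]
      exact Finset.sum_congr rfl fun j _ => (mul_assoc _ _ _)
    rw [hsum, ← haC, ← hu, Units.inv_mul]
  -- apply transitivity of the GL action over the circle algebra
  obtain ⟨M, hMunit, hMv⟩ :=
    GLtrans_of_gsr_le hgsr vTA hvTAmem (eVec m C(Circle, A)) (eVec_mem_Lg hm)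
  -- evaluate along the track
  set ev : Circle → (C(Circle, A) →+* A) :=
    fun z => (Pi.evalRingHom (fun _ : Circle => A) z).comp ContinuousMap.coeFnRingHom with hev
  set N : I → Matrix (Fin m) (Fin m) A :=
    fun t => (ev (c t)).mapMatrix M with hN
  have hNunit : ∀ t, IsUnit (N t) := fun t => hMunit.map (ev (c t)).mapMatrix
  have hNγ : ∀ t : I, (N t).mulVec (γ t) = eVec m A := by
    intro t
    funext i
    show ∑ j, N t i j * γ t j = eVec m A i
    have h2 : ∀ j, N t i j * γ t j = (M i j) (c t) * vTA j (c t) := by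
      intro j
      rw [← hvc t j]
      rfl
    simp only [h2]
    have h3 : ∑ j, (M i j) (c t) * vTA j (c t) = (M.mulVec vTA i) (c t) := by
      show _ = (∑ j, M i j * vTA j) (c t)
      simp [ContinuousMap.sum_apply]
    rw [h3, hMv]
    show (if (i : ℕ) = m - 1 then (1 : C(Circle, A)) else 0) (c t) = eVec m A i
    rw [eVec]
    split_ifs <;> simp
  have hc10 : c 1 = c 0 := by
    rw [hc]
    norm_num
  have hN10 : N 1 = N 0 := by rw [hN]; simp only [hc10]
  -- the correcting family of invertible matrices
  set U0 : (Matrix (Fin m) (Fin m) A)ˣ := (hNunit 0).unit with hU0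
  set P : I → Matrix (Fin m) (Fin m) A := fun t => U0⁻¹.val * N t with hP
  have hPunit : ∀ t, IsUnit (P t) := fun t => U0⁻¹.isUnit.mul (hNunit t)
  have hPγ : ∀ t : I, (P t).mulVec (γ t) = eVec m A := by
    intro t
    rw [hP]
    show (U0⁻¹.val * N t).mulVec (γ t) = eVec m A
    rw [← Matrix.mulVec_mulVec, hNγ t]
    have : eVec m A = U0.val.mulVec (eVec m A) := by
      conv_lhs => rw [← hNγ 0, hγ0]
      rw [hU0, (hNunit 0).unit_spec]
    conv_lhs => rw [this]
    rw [Matrix.mulVec_mulVec, Units.inv_mul, Matrix.one_mulVec]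
  have hP0 : P 0 = 1 := by
    rw [hP]
    show U0⁻¹.val * N 0 = 1
    rw [hU0]
    exact (hNunit 0).val_inv_mul
  have hP1 : P 1 = 1 := by
    rw [hP]
    show U0⁻¹.val * N 1 = 1
    rw [hN10, hU0]
    exact (hNunit 0).val_inv_mul
  -- the based homotopy
  have hPcont : Continuous fun t : I => P t := by
    rw [hP]
    refine continuous_matrix fun i j => ?_
    show Continuous fun t : I => ∑ k, U0⁻¹.val i k * N t k j
    refine continuous_finset_sum _ fun k _ => Continuous.mul continuous_const ?_
    show Continuous fun t : I => (M k j) (c t)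
    exact (M k j).continuous.comp hccont
  refine ⟨⟨⟨⟨fun p => ⟨(P p.1).mulVec ((H p : Fin m → A)),
      Lg.mulVec_mem (hPunit p.1) (H p).2⟩, ?_⟩, ?_, ?_⟩, ?_⟩⟩
  · -- continuity
    refine Continuous.subtype_mk ?_ _
    refine continuous_pi fun i => ?_
    show Continuous fun p : I × X => ∑ j, P p.1 i j * (H p : Fin m → A) j
    refine continuous_finset_sum _ fun j _ => Continuous.mul ?_ ?_
    · exact ((continuous_apply j).comp ((continuous_apply i).comp hPcont)).comp continuous_fst
    · exact (continuous_apply j).comp (continuous_subtype_val.comp H.continuous)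
  · -- map_zero_left
    intro x
    refine Subtype.ext ?_
    show (P 0).mulVec ((H (0, x) : Fin m → A)) = (f x : Fin m → A)
    rw [hP0, Matrix.one_mulVec, H.apply_zero]
  · -- map_one_left
    intro x
    refine Subtype.ext ?_
    show (P 1).mulVec ((H (1, x) : Fin m → A)) = (g x : Fin m → A)
    rw [hP1, Matrix.one_mulVec, H.apply_one]
  · -- rel {x0}
    intro t x hx
    rcases hx with rfl
    refine Subtype.ext ?_
    show (P t).mulVec ((H (t, x) : Fin m → A)) = (f x : Fin m → A)
    rw [hf0]
    exact hPγ t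


end
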